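/- (Example, Section 5, second part) In the Section-5 setup below, if h₀ is an m×m matrix over A with d h₀ = 0 and d̄ h₀ = 0 and h := h₀ (I + Φ_{-1,0}) is invertible, then h solves d(h^{-1} d̄ h) = 0. -/
import Mathlib


/-- A bidifferential calculus: a unital graded associative algebra
`Ω = ⊕_{r≥0} Ω^r` over a field `𝕂`, together with two `𝕂`-linear graded
derivations `d`, `dbar` of degree one satisfying `d² = d̄² = d d̄ + d̄ d = 0`. -/
structure BidiffCalculus (𝕂 : Type) [Field 𝕂] (Ω : Type) [Ring Ω] [Algebra 𝕂 Ω] where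
  grade : ℕ → Submodule 𝕂 Ω
  internal : DirectSum.IsInternal grade
  one_mem : (1 : Ω) ∈ grade 0
  mul_mem : ∀ (r s : ℕ), ∀ a ∈ grade r, ∀ b ∈ grade s, a * b ∈ grade (r + s)
  d : Ω →ₗ[𝕂] Ω
  dbar : Ω →ₗ[𝕂] Ω
  d_grade : ∀ (r : ℕ), ∀ a ∈ grade r, d a ∈ grade (r + 1)
  dbar_grade : ∀ (r : ℕ), ∀ a ∈ grade r, dbar a ∈ grade (r + 1)
  d_leibniz : ∀ (r : ℕ), ∀ a ∈ grade r, ∀ b : Ω,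
      d (a * b) = d a * b + ((-1 : ℤ) ^ r) • (a * d b)
  dbar_leibniz : ∀ (r : ℕ), ∀ a ∈ grade r, ∀ b : Ω,
      dbar (a * b) = dbar a * b + ((-1 : ℤ) ^ r) • (a * dbar b)
  d_d : ∀ a : Ω, d (d a) = 0
  dbar_dbar : ∀ a : Ω, dbar (dbar a) = 0
  d_dbar_anticomm : ∀ a : Ω, d (dbar a) + dbar (d a) = 0

namespace BidiffCalculus

variable {𝕂 : Type} [Field 𝕂] {Ω : Type} [Ring Ω] [Algebra 𝕂 Ω]

/-- Entrywise action of `d` on matrices over `Ω`. -/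
def matD (S : BidiffCalculus 𝕂 Ω) {m n : ℕ} (M : Matrix (Fin m) (Fin n) Ω) :
    Matrix (Fin m) (Fin n) Ω := M.map S.d

/-- Entrywise action of `dbar` on matrices over `Ω`. -/
def matDbar (S : BidiffCalculus 𝕂 Ω) {m n : ℕ} (M : Matrix (Fin m) (Fin n) Ω) :
    Matrix (Fin m) (Fin n) Ω := M.map S.dbar

/-- A matrix has all entries of degree `r`. -/
def MatIn (S : BidiffCalculus 𝕂 Ω) (r : ℕ) {m n : ℕ} (M : Matrix (Fin m) (Fin n) Ω) : Prop :=
  ∀ i j, M i j ∈ S.grade r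

end BidiffCalculus

/-- `Φ_{i,j} = θ Δ^i Ω̂^{-1} Γ^j η`, with negative powers given by powers of inverses. -/
def Phi {R : Type} [Ring R] {m n : ℕ} (θ : Matrix (Fin m) (Fin n) R)
    (η : Matrix (Fin n) (Fin m) R) (Δ Γ W : (Matrix (Fin n) (Fin n) R)ˣ) (i j : ℤ) :
    Matrix (Fin m) (Fin m) R :=
  θ * Units.val (Δ ^ i) * Units.val W⁻¹ * Units.val (Γ ^ j) * η


section Helpers

namespace BidiffCalculus

variable {𝕂 : Type} [Field 𝕂] {Ω : Type} [Ring Ω] [Algebra 𝕂 Ω] (S : BidiffCalculus 𝕂 Ω)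

/-- `f` acts as an unsigned derivation on degree-0 elements. -/
def IsDer0 (f : Ω →ₗ[𝕂] Ω) : Prop := ∀ a ∈ S.grade 0, ∀ b : Ω, f (a * b) = f a * b + a * f b

theorem d_isDer0 : S.IsDer0 S.d := fun a ha b => by simpa using S.d_leibniz 0 a ha b

theorem dbar_isDer0 : S.IsDer0 S.dbar := fun a ha b => by simpa using S.dbar_leibniz 0 a ha b

theorem isDer0_one {f : Ω →ₗ[𝕂] Ω} (hf : S.IsDer0 f) : f 1 = 0 := by
  have h := hf 1 S.one_mem 1
  rw [one_mul, one_mul, mul_one] at h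
  exact (left_eq_add).mp h

theorem matIn_mul {p q r : ℕ} {M : Matrix (Fin p) (Fin q) Ω} {N : Matrix (Fin q) (Fin r) Ω}
    (hM : S.MatIn 0 M) (hN : S.MatIn 0 N) : S.MatIn 0 (M * N) := by
  intro i j
  rw [Matrix.mul_apply]
  exact Submodule.sum_mem _ fun k _ => by simpa using S.mul_mem 0 0 _ (hM i k) _ (hN k j)

theorem matIn_add {p q : ℕ} {M N : Matrix (Fin p) (Fin q) Ω}
    (hM : S.MatIn 0 M) (hN : S.MatIn 0 N) : S.MatIn 0 (M + N) := fun i j =>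
  Submodule.add_mem _ (hM i j) (hN i j)

theorem map_mul0 {f : Ω →ₗ[𝕂] Ω} (hf : S.IsDer0 f) {p q r : ℕ}
    {M : Matrix (Fin p) (Fin q) Ω} (hM : S.MatIn 0 M) (N : Matrix (Fin q) (Fin r) Ω) :
    (M * N).map f = M.map f * N + M * N.map f := by
  ext i j
  simp only [Matrix.map_apply, Matrix.add_apply, Matrix.mul_apply]
  rw [map_sum, ← Finset.sum_add_distrib]
  exact Finset.sum_congr rfl fun k _ => hf _ (hM i k) _

theorem map_oneM {f : Ω →ₗ[𝕂] Ω} (hf : S.IsDer0 f) {p : ℕ} :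
    (1 : Matrix (Fin p) (Fin p) Ω).map f = 0 := by
  ext i j
  simp [Matrix.map_apply, Matrix.one_apply, apply_ite f, S.isDer0_one hf]

theorem map_addM (f : Ω →ₗ[𝕂] Ω) {p q : ℕ} (M N : Matrix (Fin p) (Fin q) Ω) :
    (M + N).map f = M.map f + N.map f := by
  ext i j
  simp [Matrix.map_apply, map_add]

theorem map_invM {f : Ω →ₗ[𝕂] Ω} (hf : S.IsDer0 f) {p : ℕ}
    (U : (Matrix (Fin p) (Fin p) Ω)ˣ) (hU : S.MatIn 0 (Units.val U)) :
    (Units.val U⁻¹).map f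
      = -(Units.val U⁻¹ * (Units.val U).map f * Units.val U⁻¹) := by
  have h := S.map_mul0 hf hU (Units.val U⁻¹)
  rw [Units.mul_inv, S.map_oneM hf] at h
  have h2 : Units.val U * (Units.val U⁻¹).map f
      = -((Units.val U).map f * Units.val U⁻¹) :=
    eq_neg_of_add_eq_zero_right h.symm
  calc (Units.val U⁻¹).map f
      = (Units.val U⁻¹ * Units.val U) * (Units.val U⁻¹).map f := by
        rw [Units.inv_mul, Matrix.one_mul]
    _ = Units.val U⁻¹ * (Units.val U * (Units.val U⁻¹).map f) :=
        Matrix.mul_assoc _ _ _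
    _ = Units.val U⁻¹ * -((Units.val U).map f * Units.val U⁻¹) := by rw [h2]
    _ = -(Units.val U⁻¹ * ((Units.val U).map f * Units.val U⁻¹)) := by rw [Matrix.mul_neg]
    _ = -(Units.val U⁻¹ * (Units.val U).map f * Units.val U⁻¹) := by
        rw [Matrix.mul_assoc]

theorem matD_mul0 {p q r : ℕ} {M : Matrix (Fin p) (Fin q) Ω} (hM : S.MatIn 0 M)
    (N : Matrix (Fin q) (Fin r) Ω) :
    S.matD (M * N) = S.matD M * N + M * S.matD N := S.map_mul0 S.d_isDer0 hM N

theorem matDbar_mul0 {p q r : ℕ} {M : Matrix (Fin p) (Fin q) Ω} (hM : S.MatIn 0 M)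
    (N : Matrix (Fin q) (Fin r) Ω) :
    S.matDbar (M * N) = S.matDbar M * N + M * S.matDbar N := S.map_mul0 S.dbar_isDer0 hM N

theorem matD_add {p q : ℕ} (M N : Matrix (Fin p) (Fin q) Ω) :
    S.matD (M + N) = S.matD M + S.matD N := map_addM S.d M N

theorem matDbar_add {p q : ℕ} (M N : Matrix (Fin p) (Fin q) Ω) :
    S.matDbar (M + N) = S.matDbar M + S.matDbar N := map_addM S.dbar M N

theorem matDbar_one {p : ℕ} : S.matDbar (1 : Matrix (Fin p) (Fin p) Ω) = 0 :=
  S.map_oneM S.dbar_isDer0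

theorem matD_inv {p : ℕ} (U : (Matrix (Fin p) (Fin p) Ω)ˣ)
    (hU : S.MatIn 0 (Units.val U)) :
    S.matD (Units.val U⁻¹)
      = -(Units.val U⁻¹ * S.matD (Units.val U) * Units.val U⁻¹) :=
  S.map_invM S.d_isDer0 U hU

theorem matDbar_inv {p : ℕ} (U : (Matrix (Fin p) (Fin p) Ω)ˣ)
    (hU : S.MatIn 0 (Units.val U)) :
    S.matDbar (Units.val U⁻¹)
      = -(Units.val U⁻¹ * S.matDbar (Units.val U) * Units.val U⁻¹) :=
  S.map_invM S.dbar_isDer0 U hU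

theorem matD_matD {p q : ℕ} (M : Matrix (Fin p) (Fin q) Ω) : S.matD (S.matD M) = 0 := by
  ext i j
  simp [BidiffCalculus.matD, Matrix.map_apply, S.d_d]

end BidiffCalculus

theorem unit_cancel₁ {Ω : Type} [Ring Ω] {p q : ℕ} (U : (Matrix (Fin p) (Fin p) Ω)ˣ)
    (B : Matrix (Fin p) (Fin q) Ω) :
    Units.val U * (Units.val U⁻¹ * B) = B := by
  rw [← Matrix.mul_assoc, Units.mul_inv, Matrix.one_mul]

theorem unit_cancel₂ {Ω : Type} [Ring Ω] {p q : ℕ} (U : (Matrix (Fin p) (Fin p) Ω)ˣ)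
    (B : Matrix (Fin p) (Fin q) Ω) :
    Units.val U⁻¹ * (Units.val U * B) = B := by
  rw [← Matrix.mul_assoc, Units.inv_mul, Matrix.one_mul]

end Helpers

set_option maxHeartbeats 3000000 in
/-- Example, Section 5, second part: if `h₀` is a `d`- and
`d̄`-constant matrix over `A` and `h := h₀ (I + Φ_{-1,0})` is invertible, then `h`
solves `d(h⁻¹ d̄h) = 0`. -/
theorem Phi_example_h
    {𝕂 : Type} [Field 𝕂] [CharZero 𝕂] {Ω : Type} [Ring Ω] [Algebra 𝕂 Ω]
    (S : BidiffCalculus 𝕂 Ω) {m n : ℕ}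
    (Δ Γ W : (Matrix (Fin n) (Fin n) Ω)ˣ)
    (lam kap : Matrix (Fin n) (Fin n) Ω)
    (θ : Matrix (Fin m) (Fin n) Ω) (η : Matrix (Fin n) (Fin m) Ω)
    (hΔ : S.MatIn 0 (Units.val Δ)) (hΔinv : S.MatIn 0 (Units.val Δ⁻¹))
    (hΓ : S.MatIn 0 (Units.val Γ)) (hΓinv : S.MatIn 0 (Units.val Γ⁻¹))
    (hW : S.MatIn 0 (Units.val W)) (hWinv : S.MatIn 0 (Units.val W⁻¹))
    (hlam : S.MatIn 1 lam) (hkap : S.MatIn 1 kap)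
    (hθ : S.MatIn 0 θ) (hη : S.MatIn 0 η)
    (heqΔ : S.matDbar (Units.val Δ) + (lam * Units.val Δ - Units.val Δ * lam)
        = S.matD (Units.val Δ) * Units.val Δ)
    (heqlam : S.matDbar lam + lam * lam = S.matD lam * Units.val Δ)
    (heqΓ : S.matDbar (Units.val Γ) - (kap * Units.val Γ - Units.val Γ * kap)
        = Units.val Γ * S.matD (Units.val Γ))
    (heqkap : S.matDbar kap - kap * kap = Units.val Γ * S.matD kap)
    (heqθ : S.matDbar θ = S.matD θ * Units.val Δ + θ * lam)
    (heqη : S.matDbar η = Units.val Γ * S.matD η + kap * η)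
    (hSyl : Units.val Γ * Units.val W - Units.val W * Units.val Δ = η * θ)
    (heqW : S.matDbar (Units.val W) = S.matD (Units.val W) * Units.val Δ
        - S.matD (Units.val Γ) * Units.val W + kap * Units.val W + Units.val W * lam
        + S.matD η * θ) :
    ∀ h₀ : Matrix (Fin m) (Fin m) Ω, S.MatIn 0 h₀ →
      S.matD h₀ = 0 → S.matDbar h₀ = 0 →
      ∀ h : (Matrix (Fin m) (Fin m) Ω)ˣ,
        Units.val h = h₀ * (1 + Phi θ η Δ Γ W (-1) 0) →
        S.matD (Units.val h⁻¹ * S.matDbar (Units.val h)) = 0 := by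
  
  intro h₀ h₀0 h₀d h₀b h hh
  have hPhi : Phi θ η Δ Γ W (-1) 0
      = θ * Units.val Δ⁻¹ * Units.val W⁻¹ * η := by
    unfold Phi
    rw [zpow_neg_one, zpow_zero, Units.val_one, Matrix.mul_one]
  have hIn1 := S.matIn_mul hθ hΔinv
  have hIn2 := S.matIn_mul hIn1 hWinv
  have hIn3 := S.matIn_mul hθ hWinv
  have hΓW : Units.val Γ * Units.val W
      = η * θ + Units.val W * Units.val Δ := sub_eq_iff_eq_add.mp hSyl
  have hΓval : Units.val Γ
      = (η * θ + Units.val W * Units.val Δ) * Units.val W⁻¹ := by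
    calc Units.val Γ
        = Units.val Γ * (Units.val W * Units.val W⁻¹) := by rw [Units.mul_inv, Matrix.mul_one]
      _ = (Units.val Γ * Units.val W) * Units.val W⁻¹ := (Matrix.mul_assoc _ _ _).symm
      _ = (η * θ + Units.val W * Units.val Δ) * Units.val W⁻¹ := by rw [hΓW]
  have hbΔ := eq_sub_of_add_eq heqΔ
  have hbDi := S.matDbar_inv Δ hΔ
  rw [hbΔ] at hbDi
  have hdWi := S.matD_inv W hW
  have hbWi := S.matDbar_inv W hW
  rw [heqW] at hbWi
  have hdΓ := congrArg S.matD hΓval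
  rw [S.matD_mul0 (S.matIn_add (S.matIn_mul hη hθ) (S.matIn_mul hW hΔ)),
      S.matD_add, S.matD_mul0 hη, S.matD_mul0 hW, hdWi] at hdΓ
  have key : S.matDbar (θ * Units.val Δ⁻¹ * Units.val W⁻¹ * η)
      = (1 + θ * Units.val Δ⁻¹ * Units.val W⁻¹ * η)
        * S.matD (θ * Units.val W⁻¹ * η) := by
    rw [S.matDbar_mul0 hIn2, S.matDbar_mul0 hIn1, S.matDbar_mul0 hθ,
        heqθ, heqη, hbDi, hbWi, hdΓ, hΓval,
        S.matD_mul0 hIn3, S.matD_mul0 hθ, hdWi]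
    simp only [Matrix.add_mul, Matrix.mul_add, Matrix.sub_mul, Matrix.mul_sub,
      Matrix.neg_mul, Matrix.mul_neg, Matrix.mul_assoc, Matrix.mul_one, Matrix.one_mul,
      neg_neg, neg_add, sub_eq_add_neg, unit_cancel₁, unit_cancel₂,
      Units.mul_inv, Units.inv_mul, Matrix.zero_mul, Matrix.mul_zero, zero_add, add_zero]
    abel
  have hbh : S.matDbar (Units.val h)
      = Units.val h * S.matD (θ * Units.val W⁻¹ * η) := by
    rw [hh, hPhi, S.matDbar_mul0 h₀0, h₀b, Matrix.zero_mul, zero_add,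
        S.matDbar_add, S.matDbar_one, zero_add, key]
    exact (Matrix.mul_assoc _ _ _).symm
  rw [hbh, ← Matrix.mul_assoc, Units.inv_mul, Matrix.one_mul]
  exact S.matD_matD _
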